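/- arXiv:1503.02612 — 6 statements merged into one kernel-verified Lean document; each statement's English description precedes it below -/
import Mathlib

section
/- Let $n\ge 3$ be an integer and $\kappa>0$. The function $w(r)=\kappa r+\frac{(n-1)\kappa}{r}$ satisfies $\mathcal J w(r)\le 0$ for every $r\in(0,\infty)$; that is, $w$ is a supersolution of the rotationally symmetric self-expander equation. -/
/-- The rotationally symmetric self-expander operator
`𝒥 u (r) = u''/(1+u'^2) + ((n-1)/r) u' + (r/2) u' - u/2`. -/
noncomputable def Jop (n : ℕ) (u : ℝ → ℝ) (r : ℝ) : ℝ :=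
  deriv (deriv u) r / (1 + (deriv u r) ^ 2) + ((n : ℝ) - 1) / r * deriv u r
    + r / 2 * deriv u r - u r / 2

open Topology

section LinearAddInv

variable (κ c : ℝ) {x : ℝ}

theorem hasDerivAt_linear_add_div (hx : x ≠ 0) :
    HasDerivAt (fun r : ℝ => κ * r + c / r) (κ - c / x ^ 2) x := by
  have h := ((hasDerivAt_id' x).const_mul κ).fun_add
    ((hasDerivAt_const x c).fun_div (hasDerivAt_id' x) hx)
  exact h.congr_deriv (by ring)

theorem hasDerivAt_const_sub_div_sq (hx : x ≠ 0) :
    HasDerivAt (fun r : ℝ => κ - c / r ^ 2) (2 * c / x ^ 3) x := by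
  have h := (hasDerivAt_const x κ).fun_sub
    ((hasDerivAt_const x c).fun_div (hasDerivAt_pow 2 x) (pow_ne_zero 2 hx))
  exact h.congr_deriv (by field_simp; ring)

theorem deriv_deriv_linear_add_div (hx : x ≠ 0) :
    deriv (deriv fun r : ℝ => κ * r + c / r) x = 2 * c / x ^ 3 := by
  have hderiv : deriv (fun r : ℝ => κ * r + c / r) =ᶠ[𝓝 x] fun r => κ - c / r ^ 2 := by
    filter_upwards [isOpen_ne.mem_nhds hx] with r hr
    exact (hasDerivAt_linear_add_div κ c hr).deriv
  rw [hderiv.deriv_eq]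
  exact (hasDerivAt_const_sub_div_sq κ c hx).deriv

theorem Jop_linear_add_div (n : ℕ) (hx : x ≠ 0) :
    Jop n (fun r => κ * r + c / r) x =
      2 * c / x ^ 3 / (1 + (κ - c / x ^ 2) ^ 2) + (((n : ℝ) - 1) * κ - c) / x
        - ((n : ℝ) - 1) * c / x ^ 3 := by
  rw [Jop, deriv_deriv_linear_add_div κ c hx, (hasDerivAt_linear_add_div κ c hx).deriv]
  field_simp
  ring

end LinearAddInv

/-- For `n ≥ 3` and `κ > 0`, the function `w(r) = κ r + (n-1)κ/r` is a supersolution of the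
rotationally symmetric self-expander equation: `𝒥 w ≤ 0` on `(0, ∞)`. -/
theorem stmt0 (n : ℕ) (hn : 3 ≤ n) (κ : ℝ) (hκ : 0 < κ) :
    ∀ r : ℝ, 0 < r → Jop n (fun r => κ * r + ((n : ℝ) - 1) * κ / r) r ≤ 0 := by
  intro r hr
  set c : ℝ := ((n : ℝ) - 1) * κ
  have hn' : (2 : ℝ) ≤ (n : ℝ) - 1 := by
    have : (3 : ℝ) ≤ n := by exact_mod_cast hn
    linarith
  have h2c : 0 ≤ 2 * c / r ^ 3 := by positivity
  -- For `c = (n-1)κ` the first-order terms leave only `-(n-1)c/r³`, which absorbs the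
  -- curvature term `≤ 2c/r³` since `n - 1 ≥ 2`.
  have hcurv : 2 * c / r ^ 3 / (1 + (κ - c / r ^ 2) ^ 2) ≤ 2 * c / r ^ 3 :=
    div_le_self h2c (le_add_of_nonneg_right (sq_nonneg _))
  have hdom : 2 * c / r ^ 3 ≤ ((n : ℝ) - 1) * c / r ^ 3 := by
    gcongr
  rw [Jop_linear_add_div κ c n hr.ne', sub_self, zero_div, add_zero]
  linarith
end

section
/- Let $n=2$ and $\kappa>0$, and set $K=2+2\kappa$. The function $w(r)=\kappa r+\frac{K}{r}$ satisfies $\mathcal J w(r)\le 0$ for every $r\in(0,\infty)$; more precisely, $\mathcal J w\le 0$ on $(0,\sqrt2]$ because $w'(r)^2\ge 1$ there, and $\mathcal J w(r)\le -\frac{1}{r}<0$ for $r\in[\sqrt2,\infty)$. -/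
open Real Topology

section LinearAddInv

variable (a b : ℝ) {r : ℝ}

theorem hasDerivAt_linear_add_inv (hr : r ≠ 0) :
    HasDerivAt (fun x => a * x + b / x) (a - b / r ^ 2) r := by
  have h : HasDerivAt (fun x => a * x + b * x⁻¹) (a * 1 + b * -(r ^ 2)⁻¹) r :=
    ((hasDerivAt_id' r).const_mul a).add ((hasDerivAt_inv hr).const_mul b)
  simpa [div_eq_mul_inv, sub_eq_add_neg] using h

theorem deriv_linear_add_inv (hr : r ≠ 0) :
    deriv (fun x => a * x + b / x) r = a - b / r ^ 2 :=
  (hasDerivAt_linear_add_inv a b hr).deriv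

theorem deriv_deriv_linear_add_inv (hr : r ≠ 0) :
    deriv (deriv fun x => a * x + b / x) r = 2 * b / r ^ 3 := by
  have hderiv : deriv (fun x => a * x + b / x) =ᶠ[𝓝 r] fun x => a - b * (x ^ 2)⁻¹ := by
    filter_upwards [eventually_ne_nhds hr] with x hx
    rw [deriv_linear_add_inv a b hx, div_eq_mul_inv]
  rw [hderiv.deriv_eq]
  have h : HasDerivAt (fun x => a - b * (x ^ 2)⁻¹) (-(b * (-(2 * r) / (r ^ 2) ^ 2))) r := by
    simpa using ((hasDerivAt_pow 2 r).inv (pow_ne_zero 2 hr)).const_mul b |>.const_sub a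
  rw [h.deriv]
  field_simp

theorem Jop_linear_add_inv (n : ℕ) (hr : r ≠ 0) :
    Jop n (fun x => a * x + b / x) r
      = 2 * b / (r ^ 3 * (1 + (a - b / r ^ 2) ^ 2)) + ((n : ℝ) - 1) * (a - b / r ^ 2) / r
        - b / r := by
  rw [Jop, deriv_linear_add_inv a b hr, deriv_deriv_linear_add_inv a b hr]
  field_simp
  ring

theorem Jop_two_le_of_one_le_sq_deriv (hb : 0 ≤ b) (hr : 0 < r)
    (hderiv : 1 ≤ (a - b / r ^ 2) ^ 2) :
    Jop 2 (fun x => a * x + b / x) r ≤ (a - b) / r := by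
  rw [Jop_linear_add_inv a b 2 hr.ne']
  have hfirst : 2 * b / (r ^ 3 * (1 + (a - b / r ^ 2) ^ 2)) ≤ 2 * b / (r ^ 3 * 2) :=
    div_le_div_of_nonneg_left (by positivity) (by positivity)
      (mul_le_mul_of_nonneg_left (by linarith) (by positivity))
  calc _ ≤ 2 * b / (r ^ 3 * 2) + (2 - 1) * (a - b / r ^ 2) / r - b / r := by
        push_cast; linarith
    _ = (a - b) / r := by field_simp; ring

theorem Jop_two_le_of_two_le_sq (hb : 0 ≤ b) (hr : 0 < r) (hr2 : 2 ≤ r ^ 2) :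
    Jop 2 (fun x => a * x + b / x) r ≤ (a - b / 2) / r := by
  rw [Jop_linear_add_inv a b 2 hr.ne']
  have hfirst : 2 * b / (r ^ 3 * (1 + (a - b / r ^ 2) ^ 2)) ≤ 2 * b / r ^ 3 :=
    div_le_div_of_nonneg_left (by positivity) (by positivity)
      (le_mul_of_one_le_right (by positivity) (by nlinarith))
  have hsmall : b / r ^ 2 ≤ b / 2 := div_le_div_of_nonneg_left hb (by norm_num) hr2
  calc _ ≤ 2 * b / r ^ 3 + (2 - 1) * (a - b / r ^ 2) / r - b / r := by
        push_cast; linarith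
    _ = (a - b + b / r ^ 2) / r := by field_simp; ring
    _ ≤ (a - b + b / 2) / r := by gcongr
    _ = (a - b / 2) / r := by ring

theorem deriv_linear_add_inv_le_of_sq_le_two (hb : 0 ≤ b) (hr : 0 < r) (hr2 : r ^ 2 ≤ 2) :
    deriv (fun x => a * x + b / x) r ≤ a - b / 2 := by
  rw [deriv_linear_add_inv a b hr.ne']
  have : b / 2 ≤ b / r ^ 2 := div_le_div_of_nonneg_left hb (by positivity) hr2
  linarith

end LinearAddInv

/-- For `n = 2`, `κ > 0` and `K = 2 + 2κ`, the function `w(r) = κ r + K/r` satisfies `𝒥 w ≤ 0`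
on `(0,∞)`; more precisely `w'(r)^2 ≥ 1` on `(0,√2]` (whence `𝒥 w ≤ 0` there), and
`𝒥 w (r) ≤ -1/r < 0` for `r ∈ [√2, ∞)`. -/
theorem stmt1 (κ : ℝ) (hκ : 0 < κ) (K : ℝ) (hK : K = 2 + 2 * κ) :
    (∀ r : ℝ, 0 < r → Jop 2 (fun r => κ * r + K / r) r ≤ 0) ∧
    (∀ r : ℝ, 0 < r → r ≤ Real.sqrt 2 →
      1 ≤ (deriv (fun r => κ * r + K / r) r) ^ 2) ∧
    (∀ r : ℝ, Real.sqrt 2 ≤ r → Jop 2 (fun r => κ * r + K / r) r ≤ -(1 / r)) := by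
  have hK0 : 0 ≤ K := by rw [hK]; linarith
  have hfar : ∀ r : ℝ, √2 ≤ r → Jop 2 (fun r => κ * r + K / r) r ≤ -(1 / r) := by
    intro r hr
    have hr0 : 0 < r := (sqrt_pos.2 two_pos).trans_le hr
    calc _ ≤ (κ - K / 2) / r :=
          Jop_two_le_of_two_le_sq κ K hK0 hr0 ((sqrt_le_left hr0.le).1 hr)
      _ = -(1 / r) := by rw [hK]; ring
  have hnear : ∀ r : ℝ, 0 < r → r ≤ √2 → 1 ≤ (deriv (fun r => κ * r + K / r) r) ^ 2 := by
    intro r hr hr2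
    have hneg := deriv_linear_add_inv_le_of_sq_le_two κ K hK0 hr
      ((le_sqrt hr.le zero_le_two).1 hr2)
    have hvertex : κ - K / 2 = -1 := by rw [hK]; ring
    nlinarith
  refine ⟨fun r hr => ?_, hnear, hfar⟩
  rcases le_total r √2 with hr2 | hr2
  · have hderiv := hnear r hr hr2
    rw [deriv_linear_add_inv κ K hr.ne'] at hderiv
    calc _ ≤ (κ - K) / r := Jop_two_le_of_one_le_sq_deriv κ K hK0 hr hderiv
      _ ≤ 0 := div_nonpos_of_nonpos_of_nonneg (by linarith) hr.le
  · exact (hfar r hr2).trans (neg_nonpos.2 (by positivity))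
end

section
/- Let $n\ge 3$ be an integer, $\kappa>0$ and $R>0$. Suppose $\phi\in C^2([0,R])$ satisfies $\mathcal J\phi(r)=0$ for all $r\in(0,R)$, $\phi'(0)=0$, and $\phi(R)=\kappa R$. Then $\kappa r\le\phi(r)\le\kappa r+\frac{(n-1)\kappa}{r}$ for every $r\in(0,R]$. -/
/-!
Both bounds come from the maximum principle for `𝒥`: if `𝒥 u ≤ 𝒥 v` and `v - u` has an
interior local maximum at `r`, then `u' = v'` and `v'' ≤ u''` there, and
`𝒥 u - 𝒥 v = (u'' - v'')/(1 + u'^2) - (u - v)/2` forces `v ≤ u` at `r`.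
The line `κ r` is a subsolution (`𝒥 (κ r) = (n-1)κ/r ≥ 0`) and, for `n ≥ 3`,
`κ r + (n-1)κ/r` is a supersolution. At `r = R` the boundary value `φ(R) = κ R` closes both
comparisons; at the left end, `φ'(0) = 0 < κ` rules out a maximum of `κ r - φ` at `0`, and the
blow-up of `(n-1)κ/r` lets the upper comparison start on some `[a, R]` with `a > 0`.
-/

open Filter Set Topology

theorem IsLocalMax.deriv_deriv_nonpos {f : ℝ → ℝ} {a : ℝ} (h : IsLocalMax f a)
    (hc : ContinuousAt f a) : deriv (deriv f) a ≤ 0 := by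
  by_contra! hpos
  have hconst : f =ᶠ[𝓝 a] fun _ => f a :=
    (h.and (isLocalMin_of_deriv_deriv_pos hpos h.deriv_eq_zero hc)).mono
      fun _ hx => le_antisymm hx.1 hx.2
  have hderiv : deriv f =ᶠ[𝓝 a] fun _ => 0 :=
    hconst.eventuallyEq_nhds.mono fun _ hx => hx.deriv_eq.trans (deriv_const _ _)
  simp [hderiv.deriv_eq] at hpos

theorem IsLocalMaxOn.hasDerivWithinAt_Icc_nonpos {f : ℝ → ℝ} {a b f' : ℝ}
    (h : IsLocalMaxOn f (Icc a b) a) (hab : a < b) (hf : HasDerivWithinAt f f' (Icc a b) a) :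
    f' ≤ 0 := by
  have hcone := sub_mem_posTangentConeAt_of_segment_subset (segment_subset_Icc hab.le)
  have := h.hasFDerivWithinAt_nonpos hf.hasFDerivWithinAt hcone
  simp only [ContinuousLinearMap.toSpanSingleton_apply, smul_eq_mul] at this
  exact nonpos_of_mul_nonpos_right this (sub_pos.2 hab)

theorem nonpos_of_maximum_principle {w : ℝ → ℝ} {a b : ℝ} (hab : a ≤ b)
    (hw : ContinuousOn w (Icc a b)) (ha : IsMaxOn w (Icc a b) a → w a ≤ 0) (hb : w b ≤ 0)
    (hint : ∀ x ∈ Ioo a b, IsLocalMax w x → w x ≤ 0) : ∀ x ∈ Icc a b, w x ≤ 0 := by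
  obtain ⟨x₀, hx₀, hmax⟩ := isCompact_Icc.exists_isMaxOn (nonempty_Icc.2 hab) hw
  suffices w x₀ ≤ 0 from fun x hx => (hmax hx).trans this
  rcases hx₀.1.eq_or_lt with rfl | hax
  · exact ha hmax
  rcases hx₀.2.eq_or_lt with rfl | hxb
  · exact hb
  exact hint x₀ ⟨hax, hxb⟩ (hmax.isLocalMax (Icc_mem_nhds hax hxb))

section SelfExpander

variable {n : ℕ}

theorem le_of_Jop_le {u v : ℝ → ℝ} {r : ℝ} (h1 : deriv v r = deriv u r)
    (h2 : deriv (deriv v) r ≤ deriv (deriv u) r) (hJ : Jop n u r ≤ Jop n v r) :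
    v r ≤ u r := by
  unfold Jop at hJ
  rw [h1] at hJ
  have : deriv (deriv v) r / (1 + deriv u r ^ 2) ≤ deriv (deriv u) r / (1 + deriv u r ^ 2) :=
    div_le_div_of_nonneg_right h2 (by positivity)
  linarith

theorem IsLocalMax.le_of_Jop_le {u v : ℝ → ℝ} {x : ℝ}
    (hmax : IsLocalMax (fun y => v y - u y) x)
    (hu : ∀ᶠ y in 𝓝 x, DifferentiableAt ℝ u y)
    (hv : ∀ᶠ y in 𝓝 x, DifferentiableAt ℝ v y)
    (hu' : DifferentiableAt ℝ (deriv u) x) (hv' : DifferentiableAt ℝ (deriv v) x)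
    (hJ : Jop n u x ≤ Jop n v x) : v x ≤ u x := by
  have hderiv : deriv (fun y => v y - u y) =ᶠ[𝓝 x] fun y => deriv v y - deriv u y :=
    (hu.and hv).mono fun y hy => deriv_sub hy.2 hy.1
  have h1 : deriv v x - deriv u x = 0 := hderiv.self_of_nhds.symm.trans hmax.deriv_eq_zero
  have h2 : deriv (deriv v) x - deriv (deriv u) x ≤ 0 := by
    have := hmax.deriv_deriv_nonpos
      (hv.self_of_nhds.continuousAt.sub hu.self_of_nhds.continuousAt)
    rwa [hderiv.deriv_eq, deriv_fun_sub hv' hu'] at this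
  exact _root_.le_of_Jop_le (by linarith) (by linarith) hJ

theorem Jop_const_mul (κ r : ℝ) : Jop n (fun x => κ * x) r = ((n : ℝ) - 1) / r * κ := by
  have hderiv : deriv (fun x : ℝ => κ * x) = fun _ => κ := by
    ext x; simp
  simp only [Jop, hderiv, deriv_const]
  ring

theorem hasDerivAt_mul_add_div (κ c : ℝ) {x : ℝ} (hx : x ≠ 0) :
    HasDerivAt (fun y => κ * y + c / y) (κ - c / x ^ 2) x := by
  simp only [div_eq_mul_inv]
  exact (((hasDerivAt_id' x).const_mul κ).fun_add ((hasDerivAt_inv hx).const_mul c)).congr_deriv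
    (by ring)

theorem hasDerivAt_deriv_mul_add_div (κ c : ℝ) {x : ℝ} (hx : x ≠ 0) :
    HasDerivAt (deriv fun y => κ * y + c / y) (2 * c / x ^ 3) x := by
  have hderiv : (deriv fun y => κ * y + c / y) =ᶠ[𝓝 x] fun y => κ - c / y ^ 2 :=
    (eventually_ne_nhds hx).mono fun y hy => (hasDerivAt_mul_add_div κ c hy).deriv
  have := (hasDerivAt_const x κ).sub ((hasDerivAt_const x c).div (hasDerivAt_pow 2 x)
    (pow_ne_zero 2 hx))
  exact (this.congr_deriv (by field_simp; ring)).congr_of_eventuallyEq hderiv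

theorem Jop_mul_add_div_nonpos (hn : 3 ≤ n) {κ x : ℝ} (hκ : 0 ≤ κ) (hx : 0 < x) :
    Jop n (fun y => κ * y + ((n : ℝ) - 1) * κ / y) x ≤ 0 := by
  set c := ((n : ℝ) - 1) * κ with hc
  have hn' : (3 : ℝ) ≤ n := by exact_mod_cast hn
  have hc0 : 0 ≤ c := mul_nonneg (by linarith) hκ
  unfold Jop
  rw [(hasDerivAt_deriv_mul_add_div κ c hx.ne').deriv, (hasDerivAt_mul_add_div κ c hx.ne').deriv]
  have hcurv : 2 * c / x ^ 3 / (1 + (κ - c / x ^ 2) ^ 2) ≤ 2 * c / x ^ 3 :=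
    div_le_self (by positivity) (by nlinarith [sq_nonneg (κ - c / x ^ 2)])
  have hrest : ((n : ℝ) - 1) / x * (κ - c / x ^ 2) + x / 2 * (κ - c / x ^ 2)
      - (κ * x + c / x) / 2 = -(((n : ℝ) - 1) * (c / x ^ 3)) := by
    rw [hc]; field_simp; ring
  have : 0 ≤ ((n : ℝ) - 3) * (c / x ^ 3) := mul_nonneg (by linarith) (by positivity)
  have h2 : 2 * c / x ^ 3 = 2 * (c / x ^ 3) := by ring
  linarith

variable {κ R : ℝ} {φ : ℝ → ℝ}

theorem mul_le_of_Jop_eq_zero (hn : 1 ≤ n) (hκ : 0 < κ) (hR : 0 < R)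
    (hφ1 : Differentiable ℝ φ) (hφ2 : Differentiable ℝ (deriv φ))
    (heq : ∀ r, 0 < r → r < R → Jop n φ r = 0) (h0 : deriv φ 0 = 0) (hbd : φ R = κ * R) :
    ∀ r ∈ Icc 0 R, κ * r ≤ φ r := by
  have hmp := nonpos_of_maximum_principle (w := fun x => κ * x - φ x) hR.le
    (by have := hφ1.continuous; fun_prop)
    ?_ (by simp [hbd]) ?_
  · exact fun r hr => sub_nonpos.1 (hmp r hr)
  · intro hmax
    have hw : HasDerivAt (fun x => κ * x - φ x) κ 0 := by
      simpa [h0] using ((hasDerivAt_id' (0 : ℝ)).const_mul κ).fun_sub (hφ1 0).hasDerivAt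
    linarith [hmax.localize.hasDerivWithinAt_Icc_nonpos hR hw.hasDerivWithinAt]
  · intro x hx hmax
    have hJ : Jop n φ x ≤ Jop n (fun y => κ * y) x := by
      have hn' : (1 : ℝ) ≤ n := by exact_mod_cast hn
      rw [heq x hx.1 hx.2, Jop_const_mul]
      exact mul_nonneg (div_nonneg (by linarith) hx.1.le) hκ.le
    have hlin : Differentiable ℝ (fun y : ℝ => κ * y) := by fun_prop
    exact sub_nonpos.2 <| hmax.le_of_Jop_le (.of_forall hφ1) (.of_forall hlin) (hφ2 x)
      (by simp) hJ

theorem le_mul_add_div_of_Jop_eq_zero (hn : 3 ≤ n) (hκ : 0 < κ)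
    (hφ1 : Differentiable ℝ φ) (hφ2 : Differentiable ℝ (deriv φ))
    (heq : ∀ r, 0 < r → r < R → Jop n φ r = 0) (hbd : φ R = κ * R) :
    ∀ r ∈ Ioc 0 R, φ r ≤ κ * r + ((n : ℝ) - 1) * κ / r := by
  set ψ : ℝ → ℝ := fun y => κ * y + ((n : ℝ) - 1) * κ / y with hψ
  have hn' : (3 : ℝ) ≤ n := by exact_mod_cast hn
  have hc : 0 < ((n : ℝ) - 1) * κ := mul_pos (by linarith) hκ
  intro r hr
  have hblow : ∀ᶠ a in 𝓝[>] 0, 0 < ψ a - φ a := by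
    have hinv := tendsto_inv_nhdsGT_zero.const_mul_atTop hc
    have hlim : Tendsto (fun a => κ * a - φ a) (𝓝[>] 0) (𝓝 (κ * 0 - φ 0)) :=
      ((continuous_const.mul continuous_id).sub hφ1.continuous).continuousAt.continuousWithinAt
    refine ((hinv.atTop_add hlim).eventually_gt_atTop 0).mono fun a ha => ?_
    simp only [hψ, div_eq_mul_inv] at ha ⊢
    linarith
  obtain ⟨a, hφa, ha⟩ := (hblow.and (Ioo_mem_nhdsGT hr.1)).exists
  have hmp := nonpos_of_maximum_principle (w := fun x => φ x - ψ x) (ha.2.le.trans hr.2) ?_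
    (fun _ => by linarith) ?_ ?_
  · exact sub_nonpos.1 (hmp r ⟨ha.2.le, hr.2⟩)
  · exact hφ1.continuous.continuousOn.sub <| ContinuousOn.add (by fun_prop) <|
      continuousOn_const.div continuousOn_id fun x hx => (ha.1.trans_le hx.1).ne'
  · have hR : 0 < R := hr.1.trans_le hr.2
    simp only [hψ, hbd]
    linarith [div_pos hc hR]
  · intro x hx hmax
    have hx0 : 0 < x := ha.1.trans hx.1
    refine sub_nonpos.2 <| hmax.le_of_Jop_le (n := n) ?_ (.of_forall hφ1)
      (hasDerivAt_deriv_mul_add_div _ _ hx0.ne').differentiableAt (hφ2 x) ?_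
    · exact (eventually_ne_nhds hx0.ne').mono fun y hy =>
        (hasDerivAt_mul_add_div _ _ hy).differentiableAt
    · rw [heq x hx0 hx.2]
      exact Jop_mul_add_div_nonpos hn hκ.le hx0

end SelfExpander

/-- Let `n ≥ 3`, `κ > 0`, `R > 0`. If `φ` is `C²`, solves `𝒥 φ = 0` on `(0,R)`,
satisfies `φ'(0) = 0` and `φ(R) = κ R`, then `κ r ≤ φ(r) ≤ κ r + (n-1)κ/r` on `(0,R]`. -/
theorem stmt3 (n : ℕ) (hn : 3 ≤ n) (κ R : ℝ) (hκ : 0 < κ) (hR : 0 < R)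
    (φ : ℝ → ℝ) (hφ : ContDiff ℝ 2 φ)
    (heq : ∀ r : ℝ, 0 < r → r < R → Jop n φ r = 0)
    (h0 : deriv φ 0 = 0) (hbd : φ R = κ * R) :
    ∀ r : ℝ, 0 < r → r ≤ R →
      κ * r ≤ φ r ∧ φ r ≤ κ * r + ((n : ℝ) - 1) * κ / r := by
  obtain ⟨hφ1, -, hφ'⟩ := contDiff_succ_iff_deriv.1 (show ContDiff ℝ (1 + 1) φ from hφ)
  have hφ2 : Differentiable ℝ (deriv φ) := hφ'.differentiable one_ne_zero
  intro r hr hrR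
  exact ⟨mul_le_of_Jop_eq_zero (by omega) hκ hR hφ1 hφ2 heq h0 hbd r ⟨hr.le, hrR⟩,
    le_mul_add_div_of_Jop_eq_zero hn hκ hφ1 hφ2 heq hbd r ⟨hr, hrR⟩⟩
end

section
/- Let $w\in C^1(\mathbb R^n)$ satisfy $\sup_{\mathbb R^n}|Dw|\le c_w<\infty$, and suppose there exist constants $c'_w>0$ and $\delta>0$ such that $\frac{\big(w(x)-x\cdot Dw(x)\big)^2}{1+|Dw(x)|^2}\le c'_w\,\big(1+|x|^2+w(x)^2\big)^{1-\delta}$ for every $x\in\mathbb R^n$. Then: (i) for every $x\in\mathbb R^n$ the limit $V(x):=\lim_{t\to\infty}\frac{w(tx)}{t}$ exists; (ii) $V$ is positively 1-homogeneous and Lipschitz; and (iii) $\lim_{|x|\to\infty}\frac{|w(x)-V(x)|}{|x|}=0$. -/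
/-!
Along a ray, `φ(t) = w(t x) / t` has `φ'(t) = -(w - Dw · X)(t x) / t²`. The numerator is
`⟨X, ν⟩ √(1 + |Dw|²)`, and since `|X| = O(t)` on the ray the hypothesis bounds it by `O(t^{1-δ})`
(with `δ` replaced by `min δ 1`, so that `1 - δ ≥ 0`). Thus `|φ'(t)| = O(t^{-1-δ})` is integrable
at infinity: `φ` converges, at rate `O(t^{-δ})` uniformly for unit `x`. Homogeneity and the
Lipschitz bound pass to the limit, and the uniform rate at `x / |x|`, `t = |x|` gives the decay.
-/

open Filter Topology
open scoped NNReal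

theorem abs_sub_le_of_abs_deriv_le_rpow {f f' : ℝ → ℝ} {K δ s t : ℝ} (hδ : 0 < δ) (hs : 0 < s)
    (hst : s ≤ t) (hf : ∀ τ, s ≤ τ → HasDerivAt f (f' τ) τ)
    (hf' : ∀ τ, s ≤ τ → |f' τ| ≤ K * τ ^ (-1 - δ)) :
    |f t - f s| ≤ K / δ * (s ^ (-δ) - t ^ (-δ)) := by
  have hB : ∀ τ, s ≤ τ →
      HasDerivAt (fun τ => K / δ * (s ^ (-δ) - τ ^ (-δ))) (K * τ ^ (-1 - δ)) τ := by
    intro τ hτ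
    refine (((Real.hasDerivAt_rpow_const (p := -δ) (Or.inl (hs.trans_le hτ).ne')).const_sub
      (s ^ (-δ))).const_mul (K / δ)).congr_deriv ?_
    rw [show -δ - 1 = -1 - δ by ring]
    field_simp
  refine image_norm_le_of_norm_deriv_right_le_deriv_boundary' (f := fun τ => f τ - f s)
    (fun τ hτ => ((hf τ hτ.1).sub_const _).continuousAt.continuousWithinAt)
    (fun τ hτ => ((hf τ hτ.1).sub_const _).hasDerivWithinAt) (by simp)
    (fun τ hτ => (hB τ hτ.1).continuousAt.continuousWithinAt)
    (fun τ hτ => (hB τ hτ.1).hasDerivWithinAt) (fun τ hτ => hf' τ hτ.1) ⟨hst, le_rfl⟩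

theorem exists_tendsto_of_abs_deriv_le_rpow {f f' : ℝ → ℝ} {K δ : ℝ} (hδ : 0 < δ)
    (hf : ∀ τ, 1 ≤ τ → HasDerivAt f (f' τ) τ) (hf' : ∀ τ, 1 ≤ τ → |f' τ| ≤ K * τ ^ (-1 - δ)) :
    ∃ L, Tendsto f atTop (𝓝 L) ∧ ∀ s, 1 ≤ s → |f s - L| ≤ K / δ * s ^ (-δ) := by
  have hK : 0 ≤ K := by simpa using (abs_nonneg _).trans (hf' 1 le_rfl)
  have hosc : ∀ s t, 1 ≤ s → s ≤ t → |f t - f s| ≤ K / δ * s ^ (-δ) := fun s t hs hst =>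
    (abs_sub_le_of_abs_deriv_le_rpow hδ (one_pos.trans_le hs) hst (fun τ hτ => hf τ (hs.trans hτ))
      (fun τ hτ => hf' τ (hs.trans hτ))).trans
      (by gcongr; exact sub_le_self _ (Real.rpow_nonneg (by linarith) _))
  have hdecay : Tendsto (fun s : ℝ => K / δ * s ^ (-δ)) atTop (𝓝 0) := by
    simpa using (tendsto_rpow_neg_atTop hδ).const_mul (K / δ)
  obtain ⟨L, hL⟩ : ∃ L, Tendsto f atTop (𝓝 L) := by
    refine cauchySeq_tendsto_of_complete (Metric.cauchySeq_iff'.2 fun ε hε => ?_)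
    obtain ⟨N, hN1, hNε⟩ :=
      ((eventually_ge_atTop 1).and (hdecay.eventually (gt_mem_nhds hε))).exists
    exact ⟨N, fun t ht => (hosc N t hN1 ht).trans_lt hNε⟩
  refine ⟨L, hL, fun s hs => ?_⟩
  rw [abs_sub_comm]
  refine le_of_tendsto (hL.sub_const (f s)).abs ?_
  filter_upwards [eventually_ge_atTop s] with t ht
  exact hosc s t hs ht

theorem Real.rpow_one_sub_le_mul_sq {A B τ δ : ℝ} (hA : 1 ≤ A) (hB : 1 ≤ B) (hτ : 0 ≤ τ)
    (hδ : 0 ≤ δ) (hAB : A ≤ B * τ ^ 2) : A ^ (1 - δ) ≤ B * (τ ^ (1 - min δ 1)) ^ 2 := by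
  have hexp : 0 ≤ 1 - min δ 1 := sub_nonneg.2 (min_le_right _ _)
  calc A ^ (1 - δ) ≤ A ^ (1 - min δ 1) :=
        Real.rpow_le_rpow_of_exponent_le hA (by linarith [min_le_left δ 1])
    _ ≤ (B * τ ^ 2) ^ (1 - min δ 1) := Real.rpow_le_rpow (by linarith) hAB hexp
    _ = B ^ (1 - min δ 1) * (τ ^ (1 - min δ 1)) ^ 2 := by
        rw [Real.mul_rpow (by linarith) (by positivity), Real.rpow_pow_comm hτ]
    _ ≤ B * (τ ^ (1 - min δ 1)) ^ 2 := by
        gcongr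
        exact Real.rpow_le_self_of_one_le hB (by linarith [le_min hδ zero_le_one])

section Blowdown

variable {E : Type*} [NormedAddCommGroup E] {w V : E → ℝ}

theorem LipschitzWith.one_add_sq_add_sq_le {c : ℝ≥0} (hw : LipschitzWith c w) (y : E) :
    1 + ‖y‖ ^ 2 + w y ^ 2 ≤ (1 + (|w 0| + c) ^ 2) * (1 + ‖y‖) ^ 2 := by
  have hlin : |w y| ≤ (|w 0| + c) * (1 + ‖y‖) := by
    have := hw.dist_le_mul y 0
    rw [Real.dist_eq, dist_zero_right] at this
    nlinarith [abs_sub_abs_le_abs_sub (w y) (w 0), abs_nonneg (w 0), norm_nonneg y, c.2]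
  have hsq : w y ^ 2 ≤ ((|w 0| + c) * (1 + ‖y‖)) ^ 2 := by
    rw [← sq_abs]; gcongr
  nlinarith [norm_nonneg y]

variable [NormedSpace ℝ E]

theorem exists_abs_sub_fderiv_apply_self_le {c : ℝ≥0} {c' δ : ℝ} (hδ : 0 ≤ δ)
    (hw : LipschitzWith c w) (hgrad : ∀ x, ‖fderiv ℝ w x‖ ≤ c)
    (hbound : ∀ x, (w x - fderiv ℝ w x x) ^ 2 / (1 + ‖fderiv ℝ w x‖ ^ 2)
      ≤ c' * (1 + ‖x‖ ^ 2 + (w x) ^ 2) ^ (1 - δ)) :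
    ∃ K, ∀ y, |w y - fderiv ℝ w y y| ≤ K * (1 + ‖y‖) ^ (1 - min δ 1) := by
  set B := 1 + (|w 0| + c) ^ 2
  refine ⟨√(|c'| * (1 + c ^ 2) * B), fun y => abs_le_of_sq_le_sq ?_ (by positivity)⟩
  set A := 1 + ‖y‖ ^ 2 + w y ^ 2
  have hA : A ^ (1 - δ) ≤ B * ((1 + ‖y‖) ^ (1 - min δ 1)) ^ 2 :=
    Real.rpow_one_sub_le_mul_sq (by simp only [A]; nlinarith [norm_nonneg y, sq_nonneg (w y)])
      (le_add_of_nonneg_right (sq_nonneg _)) (by positivity) hδ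
      (hw.one_add_sq_add_sq_le y)
  have hDw : 1 + ‖fderiv ℝ w y‖ ^ 2 ≤ 1 + c ^ 2 := by gcongr; exact hgrad y
  calc (w y - fderiv ℝ w y y) ^ 2
      ≤ c' * A ^ (1 - δ) * (1 + ‖fderiv ℝ w y‖ ^ 2) := (div_le_iff₀ (by positivity)).1 (hbound y)
    _ ≤ |c'| * A ^ (1 - δ) * (1 + c ^ 2) := by
        gcongr
        exact le_abs_self c'
    _ ≤ |c'| * (B * ((1 + ‖y‖) ^ (1 - min δ 1)) ^ 2) * (1 + c ^ 2) := by gcongr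
    _ = (√(|c'| * (1 + c ^ 2) * B) * (1 + ‖y‖) ^ (1 - min δ 1)) ^ 2 := by
        rw [mul_pow, Real.sq_sqrt (by positivity)]; ring

theorem hasDerivAt_apply_smul_div {x : E} {t : ℝ} (hw : DifferentiableAt ℝ w (t • x))
    (ht : t ≠ 0) :
    HasDerivAt (fun τ : ℝ => w (τ • x) / τ)
      (-(w (t • x) - fderiv ℝ w (t • x) (t • x)) / t ^ 2) t := by
  have hcomp : HasDerivAt (fun τ : ℝ => w (τ • x)) (fderiv ℝ w (t • x) x) t := by
    have hsmul : HasDerivAt (fun τ : ℝ => τ • x) x t := by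
      simpa using (hasDerivAt_id t).smul_const x
    exact hw.hasFDerivAt.comp_hasDerivAt t hsmul
  refine (hcomp.div (hasDerivAt_id t) ht).congr_deriv ?_
  rw [map_smul, smul_eq_mul]
  simp only [id]
  ring

theorem exists_tendsto_apply_smul_div (hw : Differentiable ℝ w) {K δ : ℝ} (hδ : 0 < δ)
    (hδ₁ : δ ≤ 1) (hK : ∀ y, |w y - fderiv ℝ w y y| ≤ K * (1 + ‖y‖) ^ (1 - δ)) (x : E) :
    ∃ L, Tendsto (fun t : ℝ => w (t • x) / t) atTop (𝓝 L) ∧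
      ∀ s, 1 ≤ s → |w (s • x) / s - L| ≤ K * (1 + ‖x‖) ^ (1 - δ) / δ * s ^ (-δ) := by
  have hK₀ : 0 ≤ K := by simpa using (abs_nonneg _).trans (hK 0)
  refine exists_tendsto_of_abs_deriv_le_rpow hδ
    (fun τ hτ => hasDerivAt_apply_smul_div (hw _) (by positivity)) fun τ hτ => ?_
  have hτ₀ : 0 < τ := one_pos.trans_le hτ
  have hnorm : 1 + ‖τ • x‖ ≤ τ * (1 + ‖x‖) := by
    rw [norm_smul, Real.norm_of_nonneg hτ₀.le]; nlinarith
  calc |-(w (τ • x) - fderiv ℝ w (τ • x) (τ • x)) / τ ^ 2|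
      = |w (τ • x) - fderiv ℝ w (τ • x) (τ • x)| / τ ^ (2 : ℝ) := by
        rw [abs_div, abs_neg, Real.rpow_two, abs_of_pos (pow_pos hτ₀ 2)]
    _ ≤ K * (τ * (1 + ‖x‖)) ^ (1 - δ) / τ ^ (2 : ℝ) := by
        gcongr
        exact (hK _).trans (by gcongr)
    _ = K * (1 + ‖x‖) ^ (1 - δ) * τ ^ (-1 - δ) := by
        rw [Real.mul_rpow hτ₀.le (by positivity), show -1 - δ = (1 - δ) - 2 by ring,
          Real.rpow_sub hτ₀ (1 - δ) 2]
        ring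

theorem apply_smul_of_tendsto_div
    (hV : ∀ x, Tendsto (fun t : ℝ => w (t • x) / t) atTop (𝓝 (V x))) {r : ℝ} (hr : 0 < r)
    (x : E) : V (r • x) = r * V x := by
  refine tendsto_nhds_unique (hV (r • x)) ?_
  refine (((hV x).comp (tendsto_id.atTop_mul_const hr)).const_mul r).congr' ?_
  filter_upwards [eventually_gt_atTop 0] with t ht
  simp only [Function.comp_apply, id, smul_smul]
  field_simp

theorem LipschitzWith.of_tendsto_div {c : ℝ≥0} (hw : LipschitzWith c w)
    (hV : ∀ x, Tendsto (fun t : ℝ => w (t • x) / t) atTop (𝓝 (V x))) : LipschitzWith c V := by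
  refine LipschitzWith.of_dist_le_mul fun x y => le_of_tendsto ((hV x).dist (hV y)) ?_
  filter_upwards [eventually_gt_atTop 0] with t ht
  rw [Real.dist_eq, div_sub_div_same, abs_div, abs_of_pos ht, div_le_iff₀ ht, ← Real.dist_eq]
  calc dist (w (t • x)) (w (t • y)) ≤ c * dist (t • x) (t • y) := hw.dist_le_mul _ _
    _ = c * dist x y * t := by rw [dist_smul₀, Real.norm_of_nonneg ht.le]; ring

theorem tendsto_abs_sub_div_norm_cobounded (hV : ∀ r : ℝ, 0 < r → ∀ x, V (r • x) = r * V x)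
    {C δ : ℝ} (hδ : 0 < δ)
    (hrate : ∀ u : E, ‖u‖ = 1 → ∀ s, 1 ≤ s → |w (s • u) / s - V u| ≤ C * s ^ (-δ)) :
    Tendsto (fun x => |w x - V x| / ‖x‖) (Bornology.cobounded E) (𝓝 0) := by
  have hdecay : Tendsto (fun s : ℝ => C * s ^ (-δ)) atTop (𝓝 0) := by
    simpa using (tendsto_rpow_neg_atTop hδ).const_mul C
  refine squeeze_zero' (Eventually.of_forall fun x => by positivity)
    ?_ (hdecay.comp tendsto_norm_cobounded_atTop)
  filter_upwards [tendsto_norm_cobounded_atTop.eventually_ge_atTop 1] with x hx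
  have hx₀ : 0 < ‖x‖ := one_pos.trans_le hx
  have hu : ‖‖x‖⁻¹ • x‖ = 1 := by rw [norm_smul, norm_inv, norm_norm, inv_mul_cancel₀ hx₀.ne']
  have hxu : ‖x‖ • ‖x‖⁻¹ • x = x := by rw [smul_smul, mul_inv_cancel₀ hx₀.ne', one_smul]
  have := hrate _ hu ‖x‖ hx
  rw [hxu] at this
  calc |w x - V x| / ‖x‖ = |w x / ‖x‖ - V (‖x‖⁻¹ • x)| := by
        rw [hV _ (inv_pos.2 hx₀), ← abs_of_pos hx₀, ← abs_div, abs_of_pos hx₀, sub_div,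
          inv_mul_eq_div]
    _ ≤ C * ‖x‖ ^ (-δ) := this

end Blowdown

theorem stmt9_general (n : ℕ) (w : EuclideanSpace ℝ (Fin n) → ℝ) (cw cw' δ : ℝ) (hδ : 0 < δ)
    (hw : ContDiff ℝ 1 w)
    (hgrad : ∀ x, ‖fderiv ℝ w x‖ ≤ cw)
    (hbound : ∀ x, (w x - fderiv ℝ w x x) ^ 2 / (1 + ‖fderiv ℝ w x‖ ^ 2)
      ≤ cw' * (1 + ‖x‖ ^ 2 + (w x) ^ 2) ^ (1 - δ)) :
    ∃ V : EuclideanSpace ℝ (Fin n) → ℝ,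
      (∀ x, Tendsto (fun t : ℝ => w (t • x) / t) atTop (nhds (V x))) ∧
      (∀ r : ℝ, 0 < r → ∀ x, V (r • x) = r * V x) ∧
      (∃ L : NNReal, LipschitzWith L V) ∧
      Tendsto (fun x => |w x - V x| / ‖x‖)
        (Filter.cocompact (EuclideanSpace ℝ (Fin n))) (nhds 0) := by
  have hwd : Differentiable ℝ w := hw.differentiable one_ne_zero
  have hgrad' : ∀ x, ‖fderiv ℝ w x‖ ≤ cw.toNNReal := fun x => (hgrad x).trans cw.le_coe_toNNReal
  have hlip : LipschitzWith cw.toNNReal w :=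
    lipschitzWith_of_nnnorm_fderiv_le hwd fun x => hgrad' x
  obtain ⟨K, hK⟩ := exists_abs_sub_fderiv_apply_self_le hδ.le hlip hgrad' hbound
  choose V hV hrate using
    exists_tendsto_apply_smul_div hwd (lt_min hδ one_pos) (min_le_right _ _) hK
  have hhom := fun r (hr : 0 < r) x => apply_smul_of_tendsto_div hV hr x
  refine ⟨V, hV, hhom, ⟨_, hlip.of_tendsto_div hV⟩, ?_⟩
  rw [← Metric.cobounded_eq_cocompact]
  exact tendsto_abs_sub_div_norm_cobounded hhom (lt_min hδ one_pos)
    fun u hu s hs => by simpa only [hu] using hrate u s hs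

/-- If `w ∈ C¹(ℝⁿ)` has bounded gradient and satisfies the pointwise bound
`⟨X,ν⟩² ≤ c'_w (1+|X|²)^{1-δ}` on its graph, then the blow-down limit
`V(x) = lim_{t→∞} w(tx)/t` exists, `V` is positively 1-homogeneous and Lipschitz, and
`|w(x)-V(x)|/|x| → 0` as `|x| → ∞`. -/
theorem stmt9 (n : ℕ) (w : EuclideanSpace ℝ (Fin n) → ℝ) (cw cw' δ : ℝ) (hδ : 0 < δ)
    (hw : ContDiff ℝ 1 w)
    (hgrad : ∀ x, ‖fderiv ℝ w x‖ ≤ cw)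
    (hcw' : 0 < cw')
    (hbound : ∀ x, (w x - fderiv ℝ w x x) ^ 2 / (1 + ‖fderiv ℝ w x‖ ^ 2)
      ≤ cw' * (1 + ‖x‖ ^ 2 + (w x) ^ 2) ^ (1 - δ)) :
    ∃ V : EuclideanSpace ℝ (Fin n) → ℝ,
      (∀ x, Tendsto (fun t : ℝ => w (t • x) / t) atTop (nhds (V x))) ∧
      (∀ r : ℝ, 0 < r → ∀ x, V (r • x) = r * V x) ∧
      (∃ L : NNReal, LipschitzWith L V) ∧
      Tendsto (fun x => |w x - V x| / ‖x‖)
        (Filter.cocompact (EuclideanSpace ℝ (Fin n))) (nhds 0) :=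
  stmt9_general n w cw cw' δ hδ hw hgrad hbound
end

section
/- Let $n\ge 1$ be an integer and let $\eta\in C_c^\infty((0,\infty))$ be a smooth function with compact support in $(0,\infty)$. Then $\int_0^\infty\Big(\eta'(t)+\frac{t}{4}\eta(t)\Big)^2 t^{n-1}e^{t^2/4}\,dt = \int_0^\infty \eta'(t)^2\,t^{n-1}e^{t^2/4}\,dt - \int_0^\infty\Big(\frac{n}{4}+\frac{t^2}{16}\Big)t^{n-1}e^{t^2/4}\,\eta(t)^2\,dt$. -/
/-!
Expanding the square, `(η' + tη/4)² w = η'² w + (t/2) η η' w + (t²/16) η² w` for the weight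
`w = tⁿ⁻¹ e^{t²/4}`. Since `(tⁿ e^{t²/4})' = (n + t²/2) w`, the difference between the two sides
of the identity is the derivative of `F = tⁿ e^{t²/4} η² / 4`. This `F` has compact support and
vanishes at `0` because `n ≥ 1`, so its derivative integrates to zero over `(0, ∞)`.
-/

open MeasureTheory Real Function

theorem hasDerivAt_exp_sq_div_four (t : ℝ) :
    HasDerivAt (fun s : ℝ => exp (s ^ 2 / 4)) (t / 2 * exp (t ^ 2 / 4)) t := by
  have h := ((hasDerivAt_pow 2 t).div_const 4).exp
  convert h using 1
  ring

theorem contDiff_exp_sq_div_four {k : WithTop ℕ∞} :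
    ContDiff ℝ k fun s : ℝ => exp (s ^ 2 / 4) :=
  contDiff_exp.comp ((contDiff_id.pow 2).div_const 4)

theorem hasDerivAt_sq_mul_pow_mul_exp {η : ℝ → ℝ} {t : ℝ} (hη : DifferentiableAt ℝ η t)
    (m : ℕ) :
    HasDerivAt (fun s => η s ^ 2 * s ^ (m + 1) * exp (s ^ 2 / 4) / 4)
      ((deriv η t + t / 4 * η t) ^ 2 * t ^ m * exp (t ^ 2 / 4)
        - deriv η t ^ 2 * t ^ m * exp (t ^ 2 / 4)
        + ((m + 1 : ℝ) / 4 + t ^ 2 / 16) * t ^ m * exp (t ^ 2 / 4) * η t ^ 2) t := by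
  refine ((((hη.hasDerivAt.fun_pow 2).fun_mul (hasDerivAt_pow (m + 1) t)).fun_mul
    (hasDerivAt_exp_sq_div_four t)).div_const 4).congr_deriv ?_
  push_cast
  ring

section CompactSupport

variable {η : ℝ → ℝ} (hη : ContDiff ℝ 1 η) (hsupp : HasCompactSupport η)
include hsupp

theorem HasCompactSupport.integrable_of_eq_zero_of_deriv_eq_zero {g : ℝ → ℝ} (hg : Continuous g)
    (hg0 : ∀ t, η t = 0 → deriv η t = 0 → g t = 0) : Integrable g :=
  hg.integrable_of_hasCompactSupport <| hsupp.mono' <| support_subset_iff'.2 fun _ ht =>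
    hg0 _ (image_eq_zero_of_notMem_tsupport ht) (deriv_of_notMem_tsupport ht)

include hη

theorem integral_Ioi_sq_add_mul_pow_mul_exp (m : ℕ) :
    ∫ t in Set.Ioi (0 : ℝ), (deriv η t + t / 4 * η t) ^ 2 * t ^ m * exp (t ^ 2 / 4)
      = (∫ t in Set.Ioi (0 : ℝ), deriv η t ^ 2 * t ^ m * exp (t ^ 2 / 4))
        - ∫ t in Set.Ioi (0 : ℝ),
            ((m + 1 : ℝ) / 4 + t ^ 2 / 16) * t ^ m * exp (t ^ 2 / 4) * η t ^ 2 := by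
  have hη' := hη.continuous_deriv le_rfl
  set F := fun s => η s ^ 2 * s ^ (m + 1) * exp (s ^ 2 / 4) / 4
  have hF : ContDiff ℝ 1 F :=
    (((hη.pow 2).mul (contDiff_id.pow _)).mul contDiff_exp_sq_div_four).div_const 4
  have hFsupp : HasCompactSupport F := hsupp.mono' <| support_subset_iff'.2 fun t ht => by
    simp [F, image_eq_zero_of_notMem_tsupport ht]
  have hboundary := hFsupp.integral_Ioi_deriv_eq hF 0
  rw [funext fun t => (hasDerivAt_sq_mul_pow_mul_exp (hη.differentiable one_ne_zero t) m).deriv]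
    at hboundary
  beta_reduce at hboundary
  have hL := hsupp.integrable_of_eq_zero_of_deriv_eq_zero
    (g := fun t => (deriv η t + t / 4 * η t) ^ 2 * t ^ m * exp (t ^ 2 / 4))
    (by fun_prop) fun t h0 h1 => by simp [h0, h1]
  have hA := hsupp.integrable_of_eq_zero_of_deriv_eq_zero
    (g := fun t => deriv η t ^ 2 * t ^ m * exp (t ^ 2 / 4))
    (by fun_prop) fun t _ h1 => by simp [h1]
  have hC := hsupp.integrable_of_eq_zero_of_deriv_eq_zero
    (g := fun t => ((m + 1 : ℝ) / 4 + t ^ 2 / 16) * t ^ m * exp (t ^ 2 / 4) * η t ^ 2)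
    (by fun_prop) fun t h0 _ => by simp [h0]
  rw [integral_add ?_ hC.integrableOn, integral_sub hL.integrableOn hA.integrableOn] at hboundary
  · simp only [F, zero_pow (Nat.succ_ne_zero m), mul_zero, zero_mul, zero_div, neg_zero] at hboundary
    linarith
  · exact (hL.sub hA).integrableOn

end CompactSupport

theorem stmt13_general (n : ℕ) (hn : 1 ≤ n) (η : ℝ → ℝ)
    (hη : ContDiff ℝ (⊤ : ℕ∞) η) (hsupp : HasCompactSupport η) :
    ∫ t in Set.Ioi (0 : ℝ),
        (deriv η t + t / 4 * η t) ^ 2 * t ^ (n - 1) * Real.exp (t ^ 2 / 4)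
      = (∫ t in Set.Ioi (0 : ℝ),
          (deriv η t) ^ 2 * t ^ (n - 1) * Real.exp (t ^ 2 / 4))
        - ∫ t in Set.Ioi (0 : ℝ),
            ((n : ℝ) / 4 + t ^ 2 / 16) * t ^ (n - 1) * Real.exp (t ^ 2 / 4) * (η t) ^ 2 := by
  obtain ⟨m, rfl⟩ : ∃ m, n = m + 1 := ⟨n - 1, (Nat.succ_pred_eq_of_pos hn).symm⟩
  simpa only [Nat.add_sub_cancel, Nat.cast_add_one] using
    integral_Ioi_sq_add_mul_pow_mul_exp (hη.of_le (by exact_mod_cast le_top)) hsupp m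

/-- Integration by parts identity: for `η ∈ C_c^∞((0,∞))` and `n ≥ 1`,
`∫₀^∞ (η' + (t/4)η)² tⁿ⁻¹ e^{t²/4} dt
  = ∫₀^∞ η'² tⁿ⁻¹ e^{t²/4} dt - ∫₀^∞ (n/4 + t²/16) tⁿ⁻¹ e^{t²/4} η² dt`. -/
theorem stmt13 (n : ℕ) (hn : 1 ≤ n) (η : ℝ → ℝ)
    (hη : ContDiff ℝ (⊤ : ℕ∞) η) (hsupp : HasCompactSupport η)
    (hsupp' : tsupport η ⊆ Set.Ioi (0 : ℝ)) :
    ∫ t in Set.Ioi (0 : ℝ),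
        (deriv η t + t / 4 * η t) ^ 2 * t ^ (n - 1) * Real.exp (t ^ 2 / 4)
      = (∫ t in Set.Ioi (0 : ℝ),
          (deriv η t) ^ 2 * t ^ (n - 1) * Real.exp (t ^ 2 / 4))
        - ∫ t in Set.Ioi (0 : ℝ),
            ((n : ℝ) / 4 + t ^ 2 / 16) * t ^ (n - 1) * Real.exp (t ^ 2 / 4) * (η t) ^ 2 :=
  stmt13_general n hn η hη hsupp
end

section
/- Let $n\ge 3$ be an integer and let $\lambda<-\frac{(n-2)^2}{4}$. Then there exists $\epsilon_0>0$ such that for every $\epsilon\in(0,\epsilon_0)$, $2^{2\epsilon-1}\Big(\Big(\lambda+\Big(\epsilon+1-\frac{n}{2}\Big)^2\Big)\Gamma(\epsilon)+2(n-1-2\epsilon)\Gamma(1+\epsilon)+4\Gamma(2+\epsilon)\Big)<0$, where $\Gamma$ is the Gamma function. (This exhibits a test function with negative second variation, showing that a minimal cone whose cross-sectional stability eigenvalue satisfies $\lambda_1<-\frac{(n-2)^2}{4}$ is unstable as a self-expander.) -/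
open Filter Real Set Topology

lemma gammaContAt {s : ℝ} (hs : 0 < s) : ContinuousAt Real.Gamma s := by
  refine (Real.differentiableAt_Gamma fun m => ?_).continuousAt
  have : (0:ℝ) ≤ m := Nat.cast_nonneg m
  intro h; rw [h] at hs; linarith

/-- For `n ≥ 3` and `λ < -(n-2)²/4` there is `ε₀ > 0` such that for all `ε ∈ (0, ε₀)`,
`2^{2ε-1} ((λ + (ε+1-n/2)²) Γ(ε) + 2(n-1-2ε) Γ(1+ε) + 4 Γ(2+ε)) < 0`;
hence a minimal cone with cross-sectional stability eigenvalue `λ₁ < -(n-2)²/4` is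
unstable as a self-expander. -/
theorem stmt15 (n : ℕ) (hn : 3 ≤ n) (lam : ℝ)
    (hlam : lam < -(((n : ℝ) - 2) ^ 2 / 4)) :
    ∃ ε₀ : ℝ, 0 < ε₀ ∧ ∀ ε : ℝ, 0 < ε → ε < ε₀ →
      (2 : ℝ) ^ (2 * ε - 1)
          * ((lam + (ε + 1 - (n : ℝ) / 2) ^ 2) * Real.Gamma ε
            + 2 * ((n : ℝ) - 1 - 2 * ε) * Real.Gamma (1 + ε)
            + 4 * Real.Gamma (2 + ε)) < 0 := by
  set F : ℝ → ℝ := fun ε =>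
    (lam + (ε + 1 - (n : ℝ) / 2) ^ 2) * Real.Gamma (1 + ε) * (1 / ε)
      + (2 * ((n : ℝ) - 1 - 2 * ε) * Real.Gamma (1 + ε) + 4 * Real.Gamma (2 + ε)) with hF
  have hL : (lam + (0 + 1 - (n : ℝ) / 2) ^ 2) * Real.Gamma (1 + 0) < 0 := by
    rw [add_zero, Real.Gamma_one, mul_one]
    nlinarith [sq_nonneg ((n:ℝ) - 2)]
  have hc1 : Tendsto (fun ε : ℝ => (lam + (ε + 1 - (n : ℝ) / 2) ^ 2) * Real.Gamma (1 + ε))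
      (𝓝[>] (0:ℝ)) (𝓝 ((lam + (0 + 1 - (n : ℝ) / 2) ^ 2) * Real.Gamma (1 + 0))) := by
    apply Tendsto.mono_left _ nhdsWithin_le_nhds
    have hg1 : ContinuousAt (fun ε : ℝ => Real.Gamma (1 + ε)) 0 :=
      ContinuousAt.comp (g := Real.Gamma) (f := fun ε : ℝ => 1 + ε)
        (gammaContAt (by norm_num : (0:ℝ) < 1 + 0)) (by fun_prop)
    exact (ContinuousAt.mul (by fun_prop) hg1).tendsto
  have hinv : Tendsto (fun ε : ℝ => 1 / ε) (𝓝[>] (0:ℝ)) atTop := by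
    simpa using tendsto_inv_nhdsGT_zero
  have hmain := Filter.Tendsto.neg_mul_atTop hL hc1 hinv
  have hrest : Tendsto
      (fun ε : ℝ => 2 * ((n : ℝ) - 1 - 2 * ε) * Real.Gamma (1 + ε) + 4 * Real.Gamma (2 + ε))
      (𝓝[>] (0:ℝ))
      (𝓝 (2 * ((n : ℝ) - 1 - 2 * 0) * Real.Gamma (1 + 0) + 4 * Real.Gamma (2 + 0))) := by
    apply Tendsto.mono_left _ nhdsWithin_le_nhds
    have hg1 : ContinuousAt (fun ε : ℝ => Real.Gamma (1 + ε)) 0 :=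
      ContinuousAt.comp (g := Real.Gamma) (f := fun ε : ℝ => 1 + ε)
        (gammaContAt (by norm_num : (0:ℝ) < 1 + 0)) (by fun_prop)
    have hg2 : ContinuousAt (fun ε : ℝ => Real.Gamma (2 + ε)) 0 :=
      ContinuousAt.comp (g := Real.Gamma) (f := fun ε : ℝ => 2 + ε)
        (gammaContAt (by norm_num : (0:ℝ) < 2 + 0)) (by fun_prop)
    exact ((ContinuousAt.mul (by fun_prop) hg1).add
      (continuousAt_const.mul hg2)).tendsto
  have hFbot : Tendsto F (𝓝[>] (0:ℝ)) atBot := hmain.atBot_add hrest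
  have hEv : {ε : ℝ | F ε < 0} ∈ 𝓝[>] (0:ℝ) := hFbot.eventually (eventually_lt_atBot 0)
  obtain ⟨u, hu, hsub⟩ := mem_nhdsGT_iff_exists_Ioo_subset.mp hEv
  refine ⟨u, hu, fun ε hε hεu => ?_⟩
  have hFε : F ε < 0 := hsub ⟨hε, hεu⟩
  have hΓ : Real.Gamma ε = Real.Gamma (1 + ε) / ε := by
    rw [add_comm, Real.Gamma_add_one hε.ne']
    field_simp
  have heq : (lam + (ε + 1 - (n : ℝ) / 2) ^ 2) * Real.Gamma ε
      + 2 * ((n : ℝ) - 1 - 2 * ε) * Real.Gamma (1 + ε)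
      + 4 * Real.Gamma (2 + ε) = F ε := by
    rw [hΓ]; simp only [hF]; ring
  rw [heq]
  exact mul_neg_of_pos_of_neg (Real.rpow_pos_of_pos two_pos _) hFε
end
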